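/- Let a be a nonempty list of even nonzero integers, and for an initial pair ι ∈ {(0,1),(1,0),(1,1)} let D(a, ι) denote the sum d_1 + … + d_n of the first components of the sequence produced by the auxiliary recursion starting from (d_1, e_1) = ι. Then: D(a,(1,1)) − D(a,(0,1)) ∈ {0, 1}; D(a,(1,1)) − D(a,(1,0)) ∈ {−1, 0}; and D(a,(1,0)) − D(a,(0,1)) ∈ {0, 1, 2} (differences taken in ℤ). -/
import Mathlib


/-- One step of the auxiliary recursion: given the auxiliary data `prev = (d, e)` at the
previous entry `aprev`, produce the auxiliary data at the next entry `a`. -/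
def auxStep (prev : ℕ × ℕ) (aprev a : ℤ) : ℕ × ℕ :=
  if 4 ≤ |a| then (1, 0)
  else if 0 < aprev * a then
    (if prev = (0, 1) then (1, 0) else (1, 1))
  else
    (if prev = (1, 0) then (1, 1) else (0, 1))

/-- The initial auxiliary data determined by the first entry `a₁`:
`(1,1)` if `|a₁| = 2` and `(1,0)` if `|a₁| ≥ 4`. -/
def auxInit (a : ℤ) : ℕ × ℕ := if |a| = 2 then (1, 1) else (1, 0)

/-- The tail of the auxiliary data sequence: given the data `ι` at the previous entry
`aprev`, produce the sequence of auxiliary data along the remaining entries. -/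
def auxSeqAux (ι : ℕ × ℕ) (aprev : ℤ) : List ℤ → List (ℕ × ℕ)
  | [] => []
  | a :: l => auxStep ι aprev a :: auxSeqAux (auxStep ι aprev a) a l

/-- The auxiliary data sequence `(d₁,e₁), …, (dₙ,eₙ)` of a list of integers, produced by
the auxiliary recursion starting from the initial pair `ι = (d₁, e₁)`. -/
def auxSeq (ι : ℕ × ℕ) : List ℤ → List (ℕ × ℕ)
  | [] => []
  | a :: l => ι :: auxSeqAux ι a l

/-- The sum `D(a, ι) = d₁ + ⋯ + dₙ` of the first components of the auxiliary data
sequence of `a` starting from the initial pair `ι`. -/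
def auxD (ι : ℕ × ℕ) (L : List ℤ) : ℤ :=
  (((auxSeq ι L).map Prod.fst).sum : ℤ)


private noncomputable def auxT (ι : ℕ × ℕ) (aprev : ℤ) (l : List ℤ) : ℤ :=
  (((auxSeqAux ι aprev l).map Prod.fst).sum : ℤ)

private lemma auxT_key : ∀ (l : List ℤ) (aprev : ℤ),
    (auxT (1,1) aprev l - auxT (0,1) aprev l = -1 ∨
      auxT (1,1) aprev l - auxT (0,1) aprev l = 0) ∧
    (auxT (1,1) aprev l - auxT (1,0) aprev l = -1 ∨
      auxT (1,1) aprev l - auxT (1,0) aprev l = 0)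
  | [], _ => by simp [auxT, auxSeqAux]
  | a :: l, aprev => by
    have ih := auxT_key l a
    by_cases h4 : 4 ≤ |a|
    · simp [auxT, auxSeqAux, auxStep, h4]
    · by_cases hp : 0 < aprev * a
      · have e1 : auxStep (1,1) aprev a = (1,1) := by simp [auxStep, h4, hp, Prod.ext_iff]
        have e2 : auxStep (0,1) aprev a = (1,0) := by simp [auxStep, h4, hp, Prod.ext_iff]
        have e3 : auxStep (1,0) aprev a = (1,1) := by simp [auxStep, h4, hp, Prod.ext_iff]
        simp only [auxT, auxSeqAux, e1, e2, e3, List.map_cons, List.sum_cons] at *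
        push_cast at *
        omega
      · have e1 : auxStep (1,1) aprev a = (0,1) := by simp [auxStep, h4, hp, Prod.ext_iff]
        have e2 : auxStep (0,1) aprev a = (0,1) := by simp [auxStep, h4, hp, Prod.ext_iff]
        have e3 : auxStep (1,0) aprev a = (1,1) := by simp [auxStep, h4, hp, Prod.ext_iff]
        simp only [auxT, auxSeqAux, e1, e2, e3, List.map_cons, List.sum_cons] at *
        push_cast at *
        omega

/-- For a nonempty list `a` of even nonzero integers:
`D(a,(1,1)) − D(a,(0,1)) ∈ {0,1}`, `D(a,(1,1)) − D(a,(1,0)) ∈ {−1,0}`, and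
`D(a,(1,0)) − D(a,(0,1)) ∈ {0,1,2}`. -/
theorem stmt7 (L : List ℤ) (hL : L ≠ []) (h : ∀ a ∈ L, Even a ∧ a ≠ 0) :
    (auxD (1, 1) L - auxD (0, 1) L = 0 ∨ auxD (1, 1) L - auxD (0, 1) L = 1) ∧
    (auxD (1, 1) L - auxD (1, 0) L = -1 ∨ auxD (1, 1) L - auxD (1, 0) L = 0) ∧
    (auxD (1, 0) L - auxD (0, 1) L = 0 ∨ auxD (1, 0) L - auxD (0, 1) L = 1 ∨
      auxD (1, 0) L - auxD (0, 1) L = 2) := by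
  obtain ⟨a, l, rfl⟩ : ∃ a l, L = a :: l := by
    cases L with
    | nil => exact absurd rfl hL
    | cons a l => exact ⟨a, l, rfl⟩
  have key := auxT_key l a
  have hD : ∀ ι : ℕ × ℕ, auxD ι (a :: l) = (ι.1 : ℤ) + auxT ι a l := by
    intro ι
    simp [auxD, auxSeq, auxT]
  rw [hD, hD, hD]
  simp only [Prod.fst] at *
  push_cast
  omega
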